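/- arXiv:1609.05671 — 3 statements merged into one kernel-verified Lean document; each statement's English description precedes it below -/
import Mathlib

section
/- Let p > 1 and let h, a ≥ 0 be real numbers, and let M, N ≥ 1. Suppose F : Matrix (Fin M) (Fin N) ℝ → ℝ is a nonnegative function satisfying, for all ξ, η, the Lipschitz condition |F(ξ) − F(η)| ≤ (h + F(ξ) + F(η) + ‖ξ‖^p + ‖η‖^p)^{(p−1)/p} · a^{1/p} · ‖ξ − η‖. Then for all ξ, η one has F(ξ) ≤ (p−1)·h + (2p−1)·F(η) + (p−1)·(‖ξ‖^p + ‖η‖^p) + a·‖ξ − η‖^p. -/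
/-! The Lipschitz bound is a product `S ^ ((p - 1) / p) * (a * ‖ξ - η‖ ^ p) ^ (1 / p)`, where `S`
collects `h`, the values of `F` and the `p`-th powers of the norms. Young's inequality (weighted
AM-GM) with the conjugate exponents `p / (p - 1)` and `p` bounds it by
`(p - 1) / p * S + a * ‖ξ - η‖ ^ p / p`; multiplying by `p` and moving the copy of `F ξ` contained
in `S` to the left gives the bound. -/

open Matrix

/-- The Frobenius norm of a real matrix: `‖ξ‖ = (tr(ξᵀξ))^(1/2)`. -/
noncomputable def frobNorm {M N : ℕ} (ξ : Matrix (Fin M) (Fin N) ℝ) : ℝ :=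
  Real.sqrt ((ξᵀ * ξ).trace)

lemma frobNorm_nonneg {M N : ℕ} (ξ : Matrix (Fin M) (Fin N) ℝ) : 0 ≤ frobNorm ξ :=
  Real.sqrt_nonneg _

lemma rpow_one_div_mul_rpow_self {a t p : ℝ} (ha : 0 ≤ a) (ht : 0 ≤ t) (hp : p ≠ 0) :
    (a * t ^ p) ^ (1 / p) = a ^ (1 / p) * t := by
  rw [Real.mul_rpow ha (Real.rpow_nonneg ht p), ← Real.rpow_mul ht, mul_one_div_cancel hp,
    Real.rpow_one]

lemma young_rpow_sub_one_div {p S a t : ℝ} (hp : 1 < p) (hS : 0 ≤ S) (ha : 0 ≤ a)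
    (ht : 0 ≤ t) :
    S ^ ((p - 1) / p) * a ^ (1 / p) * t ≤ (p - 1) / p * S + a * t ^ p / p := by
  have hp0 : 0 < p := zero_lt_one.trans hp
  have hweights : (p - 1) / p + 1 / p = 1 := by field_simp; ring
  calc S ^ ((p - 1) / p) * a ^ (1 / p) * t
      = S ^ ((p - 1) / p) * (a * t ^ p) ^ (1 / p) := by
        rw [mul_assoc, rpow_one_div_mul_rpow_self ha ht hp0.ne']
    _ ≤ (p - 1) / p * S + 1 / p * (a * t ^ p) :=
        Real.geom_mean_le_arith_mean2_weighted (by bound) (by positivity) hS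
          (by positivity) hweights
    _ = (p - 1) / p * S + a * t ^ p / p := by ring

theorem growth_bound_from_lipschitz_general {M N : ℕ}
    (p h a : ℝ) (hp : 1 < p) (hh : 0 ≤ h) (ha : 0 ≤ a)
    (F : Matrix (Fin M) (Fin N) ℝ → ℝ)
    (hFnonneg : ∀ ξ, 0 ≤ F ξ)
    (hLip : ∀ ξ η : Matrix (Fin M) (Fin N) ℝ,
      |F ξ - F η| ≤
        (h + F ξ + F η + frobNorm ξ ^ p + frobNorm η ^ p) ^ ((p - 1) / p) *
          a ^ (1 / p) * frobNorm (ξ - η)) :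
    ∀ ξ η : Matrix (Fin M) (Fin N) ℝ,
      F ξ ≤ (p - 1) * h + (2 * p - 1) * F η +
        (p - 1) * (frobNorm ξ ^ p + frobNorm η ^ p) + a * frobNorm (ξ - η) ^ p := by
  intro ξ η
  set S := h + F ξ + F η + frobNorm ξ ^ p + frobNorm η ^ p with hS_def
  have hp0 : 0 < p := zero_lt_one.trans hp
  have hS : 0 ≤ S := by
    have := hFnonneg ξ; have := hFnonneg η
    have := Real.rpow_nonneg (frobNorm_nonneg ξ) p
    have := Real.rpow_nonneg (frobNorm_nonneg η) p
    positivity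
  have hdiff : F ξ - F η ≤ (p - 1) / p * S + a * frobNorm (ξ - η) ^ p / p :=
    (le_abs_self _).trans <| (hLip ξ η).trans <|
      young_rpow_sub_one_div hp hS ha (frobNorm_nonneg _)
  have hscaled : p * (F ξ - F η) ≤ (p - 1) * S + a * frobNorm (ξ - η) ^ p := by
    calc p * (F ξ - F η) ≤ p * ((p - 1) / p * S + a * frobNorm (ξ - η) ^ p / p) :=
          mul_le_mul_of_nonneg_left hdiff hp0.le
      _ = (p - 1) * S + a * frobNorm (ξ - η) ^ p := by field_simp
  rw [hS_def] at hscaled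
  linarith

/-- Inequality (2.7): the growth bound derived from the Lipschitz condition (2.5)
via Young's inequality. -/
theorem growth_bound_from_lipschitz {M N : ℕ} (hM : 1 ≤ M) (hN : 1 ≤ N)
    (p h a : ℝ) (hp : 1 < p) (hh : 0 ≤ h) (ha : 0 ≤ a)
    (F : Matrix (Fin M) (Fin N) ℝ → ℝ)
    (hFnonneg : ∀ ξ, 0 ≤ F ξ)
    (hLip : ∀ ξ η : Matrix (Fin M) (Fin N) ℝ,
      |F ξ - F η| ≤
        (h + F ξ + F η + frobNorm ξ ^ p + frobNorm η ^ p) ^ ((p - 1) / p) *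
          a ^ (1 / p) * frobNorm (ξ - η)) :
    ∀ ξ η : Matrix (Fin M) (Fin N) ℝ,
      F ξ ≤ (p - 1) * h + (2 * p - 1) * F η +
        (p - 1) * (frobNorm ξ ^ p + frobNorm η ^ p) + a * frobNorm (ξ - η) ^ p :=
  growth_bound_from_lipschitz_general p h a hp hh ha F hFnonneg hLip
end

section
/- Let p > 1 and let h, a ≥ 0 be real numbers, and let M, N ≥ 1. Suppose F : Matrix (Fin M) (Fin N) ℝ → ℝ is a nonnegative function with F(0) = 0 satisfying, for all ξ, η, the Lipschitz condition |F(ξ) − F(η)| ≤ (h + F(ξ) + F(η) + ‖ξ‖^p + ‖η‖^p)^{(p−1)/p} · a^{1/p} · ‖ξ − η‖. Then for all ξ one has F(ξ) ≤ (p−1)·h + (p−1+a)·‖ξ‖^p. -/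
open Matrix

/-! Taking `η = 0` in the Lipschitz condition gives
`F ξ ≤ (h + F ξ + ‖ξ‖^p)^((p-1)/p) · (a ‖ξ‖^p)^(1/p)`. Young's inequality with the conjugate
exponents `p/(p-1)` and `p` bounds the right side by `((p-1)(h + F ξ + ‖ξ‖^p) + a ‖ξ‖^p)/p`,
and the term `(p-1)/p · F ξ` is then absorbed into the left side. -/

@[simp]
lemma frobNorm_zero {M N : ℕ} : frobNorm (0 : Matrix (Fin M) (Fin N) ℝ) = 0 := by
  simp [frobNorm]

namespace Real

lemma rpow_sub_one_div_mul_rpow_inv_le {p X Y : ℝ} (hp : 1 < p) (hX : 0 ≤ X) (hY : 0 ≤ Y) :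
    X ^ ((p - 1) / p) * Y ^ (1 / p) ≤ ((p - 1) * X + Y) / p := by
  have hp0 : 0 < p := by linarith
  have hweights : (p - 1) / p + 1 / p = 1 := by field_simp; ring
  calc X ^ ((p - 1) / p) * Y ^ (1 / p) ≤ (p - 1) / p * X + 1 / p * Y :=
        geom_mean_le_arith_mean2_weighted (by bound) (by positivity) hX hY hweights
    _ = ((p - 1) * X + Y) / p := by ring

lemma le_of_le_rpow_sub_one_div_mul_rpow_inv {p h a s x : ℝ} (hp : 1 < p)
    (hX : 0 ≤ h + x + s) (ha : 0 ≤ a) (hs : 0 ≤ s)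
    (hx : x ≤ (h + x + s) ^ ((p - 1) / p) * (a * s) ^ (1 / p)) :
    x ≤ (p - 1) * h + (p - 1 + a) * s := by
  have hp0 : 0 < p := by linarith
  have hyoung : x * p ≤ (p - 1) * (h + x + s) + a * s :=
    (le_div_iff₀ hp0).1 (hx.trans (rpow_sub_one_div_mul_rpow_inv_le hp hX (by positivity)))
  linarith

lemma mul_rpow_rpow_one_div {p a r : ℝ} (hp : p ≠ 0) (ha : 0 ≤ a) (hr : 0 ≤ r) :
    (a * r ^ p) ^ (1 / p) = a ^ (1 / p) * r := by
  rw [mul_rpow ha (rpow_nonneg hr p), one_div, rpow_rpow_inv hr hp]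

end Real

theorem growth_bound_at_zero_general {M N : ℕ}
    (p h a : ℝ) (hp : 1 < p) (hh : 0 ≤ h) (ha : 0 ≤ a)
    (F : Matrix (Fin M) (Fin N) ℝ → ℝ)
    (hFnonneg : ∀ ξ, 0 ≤ F ξ)
    (hF0 : F 0 = 0)
    (hLip : ∀ ξ η : Matrix (Fin M) (Fin N) ℝ,
      |F ξ - F η| ≤
        (h + F ξ + F η + frobNorm ξ ^ p + frobNorm η ^ p) ^ ((p - 1) / p) *
          a ^ (1 / p) * frobNorm (ξ - η)) :
    ∀ ξ : Matrix (Fin M) (Fin N) ℝ,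
      F ξ ≤ (p - 1) * h + (p - 1 + a) * frobNorm ξ ^ p := by
  intro ξ
  have hp0 : p ≠ 0 := by positivity
  have hr := frobNorm_nonneg ξ
  apply Real.le_of_le_rpow_sub_one_div_mul_rpow_inv hp
    (by have := hFnonneg ξ; positivity) ha (by positivity)
  have hLip0 := hLip ξ 0
  rw [hF0, frobNorm_zero, Real.zero_rpow hp0, sub_zero, sub_zero, add_zero, add_zero] at hLip0
  rw [Real.mul_rpow_rpow_one_div hp0 ha hr, ← mul_assoc]
  exact (le_abs_self _).trans hLip0

/-- Inequality (2.8): the case `η = 0` of the growth bound derived from the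
Lipschitz condition (2.5). -/
theorem growth_bound_at_zero {M N : ℕ} (hM : 1 ≤ M) (hN : 1 ≤ N)
    (p h a : ℝ) (hp : 1 < p) (hh : 0 ≤ h) (ha : 0 ≤ a)
    (F : Matrix (Fin M) (Fin N) ℝ → ℝ)
    (hFnonneg : ∀ ξ, 0 ≤ F ξ)
    (hF0 : F 0 = 0)
    (hLip : ∀ ξ η : Matrix (Fin M) (Fin N) ℝ,
      |F ξ - F η| ≤
        (h + F ξ + F η + frobNorm ξ ^ p + frobNorm η ^ p) ^ ((p - 1) / p) *
          a ^ (1 / p) * frobNorm (ξ - η)) :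
    ∀ ξ : Matrix (Fin M) (Fin N) ℝ,
      F ξ ≤ (p - 1) * h + (p - 1 + a) * frobNorm ξ ^ p :=
  growth_bound_at_zero_general p h a hp hh ha F hFnonneg hF0 hLip
end

section
/- Let N ≥ 1 and p > 1. Let E := Matrix (Fin N) (Fin N) ℝ be equipped with the Frobenius inner product ⟪ξ, η⟫ = tr(ξᵀη), and for ξ ∈ E write ξˢ := (ξ + ξᵀ)/2. Let A : E →L[ℝ] E be a continuous linear map that is symmetric (⟪Aξ, η⟫ = ⟪ξ, Aη⟫ for all ξ, η ∈ E) and satisfies ⟪Aζ, ζ⟫ ≥ 0 for every symmetric matrix ζ. Then for all ξ, η ∈ E, |⟪Aξˢ, ξˢ⟫^{p/2} − ⟪Aηˢ, ηˢ⟫^{p/2}| ≤ p · (⟪Aξˢ, ξˢ⟫^{1/2} + ⟪Aηˢ, ηˢ⟫^{1/2})^{p−1} · ‖A‖^{1/2} · ‖ξ − η‖, where ‖A‖ is the operator norm of A and ‖·‖ the Frobenius norm. -/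
/-!
Since `A` is symmetric and nonnegative on symmetric matrices, `(ξ, η) ↦ ⟪A ξˢ, ηˢ⟫` is a positive
semidefinite bilinear form, so `a(ξ) = ⟪A ξˢ, ξˢ⟫^(1/2)` is a seminorm. Hence
`|a(ξ) - a(η)| ≤ a(ξ - η) ≤ ‖A‖^(1/2) ‖(ξ - η)ˢ‖ ≤ ‖A‖^(1/2) ‖ξ - η‖`, and the estimate follows from
the mean value theorem for `t ↦ t^p` between `a(η)` and `a(ξ)`, whose derivative is at most
`p (a(ξ) + a(η))^(p-1)` there.
-/

open Matrix

attribute [local instance] Matrix.frobeniusNormedAddCommGroup Matrix.frobeniusNormedSpace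

/-- The Frobenius inner product of two real square matrices: `⟪ξ, η⟫ = tr(ξᵀη)`. -/
noncomputable def finner {N : ℕ} (ξ η : Matrix (Fin N) (Fin N) ℝ) : ℝ :=
  (ξᵀ * η).trace

/-- The symmetric part `ξˢ = (ξ + ξᵀ)/2` of a square matrix. -/
noncomputable def symPart {N : ℕ} (ξ : Matrix (Fin N) (Fin N) ℝ) :
    Matrix (Fin N) (Fin N) ℝ :=
  (1 / 2 : ℝ) • (ξ + ξᵀ)

open Real Set

theorem Real.abs_rpow_sub_rpow_le {p a b : ℝ} (hp : 1 ≤ p) (ha : 0 ≤ a) (hb : 0 ≤ b) :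
    |a ^ p - b ^ p| ≤ p * (a + b) ^ (p - 1) * |a - b| := by
  have hderiv : ∀ x ∈ Icc 0 (a + b),
      HasDerivWithinAt (· ^ p) (p * x ^ (p - 1)) (Icc 0 (a + b)) x :=
    fun x _ => (hasDerivAt_rpow_const (Or.inr hp)).hasDerivWithinAt
  have hbound : ∀ x ∈ Icc 0 (a + b), ‖p * x ^ (p - 1)‖ ≤ p * (a + b) ^ (p - 1) := by
    rintro x ⟨hx0, hxab⟩
    rw [norm_of_nonneg (by positivity)]
    gcongr
  simpa only [norm_eq_abs] using (convex_Icc 0 (a + b)).norm_image_sub_le_of_norm_hasDerivWithin_le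
    hderiv hbound ⟨hb, by linarith⟩ ⟨ha, by linarith⟩

namespace LinearMap.BilinForm

variable {M : Type*} [AddCommGroup M] [Module ℝ M] {B : LinearMap.BilinForm ℝ M}

theorem IsPosSemidef.sqrt_apply_add_le (hB : B.IsPosSemidef) (x y : M) :
    √(B (x + y) (x + y)) ≤ √(B x x) + √(B y y) := by
  have hxy : B x y ≤ √(B x x) * √(B y y) := by
    rw [← sqrt_mul (hB.nonneg x)]
    exact le_sqrt_of_sq_le (B.apply_sq_le_of_symm hB.nonneg (isSymm_iff.1 hB.isSymm) x y)
  rw [sqrt_le_left (by positivity), add_sq, sq_sqrt (hB.nonneg x), sq_sqrt (hB.nonneg y)]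
  simp only [map_add, LinearMap.add_apply, hB.isSymm.eq y x]
  linarith

theorem IsPosSemidef.abs_sqrt_sub_sqrt_le (hB : B.IsPosSemidef) (x y : M) :
    |√(B x x) - √(B y y)| ≤ √(B (x - y) (x - y)) := by
  have hx := hB.sqrt_apply_add_le (x - y) y
  have hy := hB.sqrt_apply_add_le (y - x) x
  rw [sub_add_cancel] at hx hy
  rw [← neg_sub x y] at hy
  simp only [map_neg, LinearMap.neg_apply, neg_neg] at hy
  rw [abs_sub_le_iff]
  constructor <;> linarith

end LinearMap.BilinForm

section Frobenius

variable {N : ℕ}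

/-- The Frobenius norm of `ξ` is by definition the norm of this vector, which transfers
Cauchy–Schwarz to `finner`. -/
theorem finner_eq_inner (ξ η : Matrix (Fin N) (Fin N) ℝ) :
    finner ξ η = inner ℝ (WithLp.toLp 2 fun i => WithLp.toLp 2 (ξ i) :
      WithLp 2 (Fin N → EuclideanSpace ℝ (Fin N))) (WithLp.toLp 2 fun i => WithLp.toLp 2 (η i)) := by
  simp only [finner, trace, diag_apply, Matrix.mul_apply, transpose_apply, PiLp.inner_apply,
    RCLike.inner_apply, Real.ringHom_apply, mul_comm]
  exact Finset.sum_comm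

theorem finner_comm (ξ η : Matrix (Fin N) (Fin N) ℝ) : finner ξ η = finner η ξ := by
  rw [finner_eq_inner, finner_eq_inner, real_inner_comm]

theorem finner_le_norm_mul_norm (ξ η : Matrix (Fin N) (Fin N) ℝ) : finner ξ η ≤ ‖ξ‖ * ‖η‖ := by
  rw [finner_eq_inner]
  exact real_inner_le_norm _ _

variable (N) in
noncomputable def finnerForm : LinearMap.BilinForm ℝ (Matrix (Fin N) (Fin N) ℝ) :=
  LinearMap.mk₂ ℝ finner (fun _ _ _ => by simp [finner, Matrix.add_mul])
    (fun _ _ _ => by simp [finner]) (fun _ _ _ => by simp [finner, Matrix.mul_add])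
    (fun _ _ _ => by simp [finner])

variable (N) in
noncomputable def symPartLinearMap : Matrix (Fin N) (Fin N) ℝ →ₗ[ℝ] Matrix (Fin N) (Fin N) ℝ where
  toFun := symPart
  map_add' _ _ := by simp only [symPart, Matrix.transpose_add]; module
  map_smul' _ _ := by simp only [symPart, Matrix.transpose_smul, RingHom.id_apply]; module

theorem transpose_symPart (ξ : Matrix (Fin N) (Fin N) ℝ) : (symPart ξ)ᵀ = symPart ξ := by
  simp only [symPart, Matrix.transpose_smul, Matrix.transpose_add, Matrix.transpose_transpose,
    add_comm]

theorem norm_symPart_le (ξ : Matrix (Fin N) (Fin N) ℝ) : ‖symPart ξ‖ ≤ ‖ξ‖ := by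
  calc ‖symPart ξ‖ ≤ 1 / 2 * (‖ξ‖ + ‖ξᵀ‖) := by
        rw [symPart, norm_smul, norm_of_nonneg (by norm_num)]
        gcongr
        exact norm_add_le _ _
    _ = ‖ξ‖ := by rw [Matrix.frobenius_norm_transpose]; ring

theorem sqrt_finner_apply_self_le (A : Matrix (Fin N) (Fin N) ℝ →L[ℝ] Matrix (Fin N) (Fin N) ℝ)
    (ξ : Matrix (Fin N) (Fin N) ℝ) : √(finner (A ξ) ξ) ≤ √A.opNorm * ‖ξ‖ := by
  rw [← sqrt_sq (norm_nonneg ξ), ← sqrt_mul' _ (sq_nonneg ‖ξ‖)]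
  gcongr
  calc finner (A ξ) ξ ≤ ‖A ξ‖ * ‖ξ‖ := finner_le_norm_mul_norm _ _
    _ ≤ A.opNorm * ‖ξ‖ * ‖ξ‖ := by gcongr; exact A.le_opNorm ξ
    _ = A.opNorm * ‖ξ‖ ^ 2 := by ring

noncomputable def symPartForm (A : Matrix (Fin N) (Fin N) ℝ →L[ℝ] Matrix (Fin N) (Fin N) ℝ) :
    LinearMap.BilinForm ℝ (Matrix (Fin N) (Fin N) ℝ) :=
  (finnerForm N).compl₁₂ (A.toLinearMap ∘ₗ symPartLinearMap N) (symPartLinearMap N)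

theorem symPartForm_apply (A : Matrix (Fin N) (Fin N) ℝ →L[ℝ] Matrix (Fin N) (Fin N) ℝ)
    (ξ η : Matrix (Fin N) (Fin N) ℝ) :
    symPartForm A ξ η = finner (A (symPart ξ)) (symPart η) := rfl

theorem isPosSemidef_symPartForm (A : Matrix (Fin N) (Fin N) ℝ →L[ℝ] Matrix (Fin N) (Fin N) ℝ)
    (hAsymm : ∀ ξ η : Matrix (Fin N) (Fin N) ℝ, finner (A ξ) η = finner ξ (A η))
    (hApos : ∀ ζ : Matrix (Fin N) (Fin N) ℝ, ζᵀ = ζ → 0 ≤ finner (A ζ) ζ) :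
    (symPartForm A).IsPosSemidef where
  eq ξ η := by rw [symPartForm_apply, symPartForm_apply, hAsymm, finner_comm]
  nonneg ξ := hApos _ (transpose_symPart ξ)

theorem abs_sqrt_symPartForm_sub_le
    {A : Matrix (Fin N) (Fin N) ℝ →L[ℝ] Matrix (Fin N) (Fin N) ℝ}
    (hA : (symPartForm A).IsPosSemidef) (ξ η : Matrix (Fin N) (Fin N) ℝ) :
    |√(symPartForm A ξ ξ) - √(symPartForm A η η)| ≤ √A.opNorm * ‖ξ - η‖ :=
  calc _ ≤ √(symPartForm A (ξ - η) (ξ - η)) := hA.abs_sqrt_sub_sqrt_le ξ η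
    _ ≤ √A.opNorm * ‖symPart (ξ - η)‖ := sqrt_finner_apply_self_le A _
    _ ≤ √A.opNorm * ‖ξ - η‖ := by gcongr; exact norm_symPart_le _

end Frobenius

theorem example1_mean_value_estimate_general {N : ℕ} (p : ℝ) (hp : 1 < p)
    (A : Matrix (Fin N) (Fin N) ℝ →L[ℝ] Matrix (Fin N) (Fin N) ℝ)
    (hAsymm : ∀ ξ η : Matrix (Fin N) (Fin N) ℝ, finner (A ξ) η = finner ξ (A η))
    (hApos : ∀ ζ : Matrix (Fin N) (Fin N) ℝ, ζᵀ = ζ → 0 ≤ finner (A ζ) ζ) :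
    ∀ ξ η : Matrix (Fin N) (Fin N) ℝ,
      |finner (A (symPart ξ)) (symPart ξ) ^ (p / 2) -
          finner (A (symPart η)) (symPart η) ^ (p / 2)| ≤
        p * (finner (A (symPart ξ)) (symPart ξ) ^ ((1 : ℝ) / 2) +
              finner (A (symPart η)) (symPart η) ^ ((1 : ℝ) / 2)) ^ (p - 1) *
          A.opNorm ^ ((1 : ℝ) / 2) * ‖ξ - η‖ := by
  intro ξ η
  have hB := isPosSemidef_symPartForm A hAsymm hApos
  simp only [← symPartForm_apply, ← sqrt_eq_rpow, rpow_div_two_eq_sqrt _ (hB.nonneg _), rpow_one]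
  calc _ ≤ p * (√(symPartForm A ξ ξ) + √(symPartForm A η η)) ^ (p - 1) *
          |√(symPartForm A ξ ξ) - √(symPartForm A η η)| :=
        abs_rpow_sub_rpow_le hp.le (sqrt_nonneg _) (sqrt_nonneg _)
    _ ≤ p * (√(symPartForm A ξ ξ) + √(symPartForm A η η)) ^ (p - 1) * (√A.opNorm * ‖ξ - η‖) := by
        gcongr
        exact abs_sqrt_symPartForm_sub_le hB ξ η
    _ = _ := by rw [← mul_assoc]

/-- The mean-value estimate established in the proof of Example 1 for the density
`F(ξ) = (Aξˢ : ξˢ)^(p/2)`. Here `‖A‖` is the operator norm of `A` with respect to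
the Frobenius norm, and `‖ξ - η‖` is the Frobenius norm. -/
theorem example1_mean_value_estimate {N : ℕ} (hN : 1 ≤ N) (p : ℝ) (hp : 1 < p)
    (A : Matrix (Fin N) (Fin N) ℝ →L[ℝ] Matrix (Fin N) (Fin N) ℝ)
    (hAsymm : ∀ ξ η : Matrix (Fin N) (Fin N) ℝ, finner (A ξ) η = finner ξ (A η))
    (hApos : ∀ ζ : Matrix (Fin N) (Fin N) ℝ, ζᵀ = ζ → 0 ≤ finner (A ζ) ζ) :
    ∀ ξ η : Matrix (Fin N) (Fin N) ℝ,
      |finner (A (symPart ξ)) (symPart ξ) ^ (p / 2) -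
          finner (A (symPart η)) (symPart η) ^ (p / 2)| ≤
        p * (finner (A (symPart ξ)) (symPart ξ) ^ ((1 : ℝ) / 2) +
              finner (A (symPart η)) (symPart η) ^ ((1 : ℝ) / 2)) ^ (p - 1) *
          A.opNorm ^ ((1 : ℝ) / 2) * ‖ξ - η‖ :=
  example1_mean_value_estimate_general p hp A hAsymm hApos
end
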